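/- Let b, C ∈ ℂ and define f : ℂ → ℂ by f(z) = exp(i·b·z − (z² + C)²/2). Then for every real λ, ∫_{−∞}^{∞} f(y + iλ) dy = ∫_{−∞}^{∞} f(y) dy; that is, the integral of f over any line parallel to the real axis equals its integral over the real axis. -/

import Mathlib

open Real Complex Filter MeasureTheory intervalIntegral Topology

private lemma poly_bound (u v p q L x y : ℝ) (hy : |y| ≤ L) :
    -(u*y + v*x) - ((x^2-y^2+p)^2 - (2*x*y+q)^2)/2
      ≤ ((|v|/2 + 5*L^2 + |p| + 1)^2/2 + (|u| * L + |v|/2 + q^2)) - x^2 := by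
  have hL : 0 ≤ L := (abs_nonneg y).trans hy
  have hy2 : y^2 ≤ L^2 := by nlinarith [abs_nonneg y, _root_.sq_abs y]
  have h1 : -(u*y) ≤ |u| * L := by
    calc -(u*y) ≤ |u*y| := neg_le_abs _
    _ = |u| * |y| := abs_mul u y
    _ ≤ |u| * L := by gcongr
  have h2 : -(v*x) ≤ |v| * (1 + x^2)/2 := by
    have : -(v*x) ≤ |v| * |x| := by rw [← abs_mul]; exact neg_le_abs _
    nlinarith [sq_nonneg (|x| - 1), abs_nonneg v, _root_.sq_abs x]
  have h3 : (2*x*y+q)^2/2 ≤ 4*x^2*L^2 + q^2 := by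
    nlinarith [sq_nonneg (2*x*y - q), sq_nonneg x, sq_nonneg (x*y)]
  have h4 : -(x^2-y^2+p)^2/2 ≤ -(x^2)^2/2 + x^2*(L^2 + |p|) := by
    nlinarith [sq_nonneg (y^2 - p), le_abs_self p, neg_abs_le p, sq_nonneg x, sq_nonneg y]
  have h5 : -(x^2)^2/2 + x^2*(|v|/2 + 5*L^2 + |p| + 1) ≤ (|v|/2 + 5*L^2 + |p| + 1)^2/2 := by
    nlinarith [sq_nonneg (x^2 - (|v|/2 + 5*L^2 + |p| + 1))]
  nlinarith [sq_nonneg x]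

private lemma re_formula (b C : ℂ) (x y : ℝ) :
    (Complex.I * b * ((x:ℂ) + (y:ℂ)*Complex.I) - (((x:ℂ)+(y:ℂ)*Complex.I)^2 + C)^2 / 2).re
      = -(b.re*y + b.im*x) - ((x^2-y^2+C.re)^2 - (2*x*y+C.im)^2)/2 := by
  simp [Complex.div_re, Complex.normSq, pow_two]
  ring

/-- Uniform bound on the integrand in a horizontal strip. -/
private lemma norm_f_le (b C : ℂ) (L : ℝ) :
    ∃ M : ℝ, ∀ x y : ℝ, |y| ≤ L →
      ‖Complex.exp (Complex.I * b * ((x:ℂ) + (y:ℂ)*Complex.I) -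
          (((x:ℂ)+(y:ℂ)*Complex.I)^2 + C)^2 / 2)‖ ≤ Real.exp (M - x^2) := by
  refine ⟨(|b.im|/2 + 5*L^2 + |C.re| + 1)^2/2 + (|b.re| * L + |b.im|/2 + C.im^2),
    fun x y hy => ?_⟩
  rw [Complex.norm_exp, Real.exp_le_exp, re_formula]
  exact poly_bound b.re b.im C.re C.im L x y hy

private lemma integrable_f (b C : ℂ) (y : ℝ) :
    MeasureTheory.Integrable fun x : ℝ =>
      Complex.exp (Complex.I * b * ((x:ℂ) + (y:ℂ)*Complex.I) -
          (((x:ℂ)+(y:ℂ)*Complex.I)^2 + C)^2 / 2) := by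
  obtain ⟨M, hM⟩ := norm_f_le b C |y|
  have hcont : Continuous fun x : ℝ =>
      Complex.exp (Complex.I * b * ((x:ℂ) + (y:ℂ)*Complex.I) -
          (((x:ℂ)+(y:ℂ)*Complex.I)^2 + C)^2 / 2) := by fun_prop
  have hint : MeasureTheory.Integrable fun x : ℝ => Real.exp M * Real.exp (-(1:ℝ)*x^2) :=
    (integrable_exp_neg_mul_sq one_pos).const_mul _
  refine hint.mono' hcont.aestronglyMeasurable (Filter.Eventually.of_forall fun x => ?_)
  calc ‖Complex.exp (Complex.I * b * ((x:ℂ) + (y:ℂ)*Complex.I) -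
          (((x:ℂ)+(y:ℂ)*Complex.I)^2 + C)^2 / 2)‖ ≤ Real.exp (M - x^2) :=
        hM x y le_rfl
    _ = Real.exp M * Real.exp (-(1:ℝ)*x^2) := by
        rw [← Real.exp_add]; ring_nf

theorem integral_horizontal_line_eq
    (b C : ℂ) (lam : ℝ) :
    (∫ y : ℝ,
        Complex.exp (Complex.I * b * ((y : ℂ) + Complex.I * (lam : ℂ)) -
          (((y : ℂ) + Complex.I * (lam : ℂ)) ^ 2 + C) ^ 2 / 2))
      = ∫ y : ℝ, Complex.exp (Complex.I * b * (y : ℂ) - ((y : ℂ) ^ 2 + C) ^ 2 / 2) := by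
  set f : ℂ → ℂ := fun z => Complex.exp (Complex.I * b * z - (z^2 + C)^2 / 2) with hf
  obtain ⟨M, hM⟩ := norm_f_le b C |lam|
  -- the four contour pieces
  set I₁ : ℝ → ℂ := fun T => ∫ x : ℝ in -T..T, f (x + lam*Complex.I) with hI₁
  set I₂ : ℝ → ℂ := fun T => ∫ x : ℝ in -T..T, f x with hI₂
  set I₄ : ℝ → ℂ := fun T => ∫ y : ℝ in (0:ℝ)..lam, f ((T:ℂ) + y*Complex.I) with hI₄
  set I₅ : ℝ → ℂ := fun T => ∫ y : ℝ in (0:ℝ)..lam, f (-(T:ℂ) + y*Complex.I) with hI₅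
  have hd : Differentiable ℂ f := by
    apply Differentiable.cexp
    apply Differentiable.sub
    · exact (differentiable_const _).mul differentiable_id
    · exact (((differentiable_pow 2).add_const C).pow 2).div_const 2
  have C0 : ∀ T : ℝ, I₂ T - I₁ T + Complex.I * I₄ T - Complex.I * I₅ T = 0 := by
    intro T
    have := integral_boundary_rect_eq_zero_of_differentiableOn f (-(T:ℝ)) ((T:ℝ) + lam*Complex.I)
      (hd.differentiableOn)
    simpa only [neg_im, ofReal_im, neg_zero, ofReal_zero, zero_mul, add_zero, neg_re,
      ofReal_re, add_re, mul_re, I_re, mul_zero, I_im, tsub_zero, add_im, mul_im,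
      mul_one, zero_add, smul_eq_mul, ofReal_neg, sub_zero] using this
  -- integrability on the two horizontal lines
  have hint1 : MeasureTheory.Integrable fun x : ℝ => f (x + lam*Complex.I) := by
    simpa using integrable_f b C lam
  have hint2 : MeasureTheory.Integrable fun x : ℝ => f (x:ℂ) := by
    have := integrable_f b C 0
    simpa using this
  -- vertical integrals vanish
  have hvert : ∀ s : ℝ → ℝ, (∀ T, |s T| = |T|) →
      Tendsto (fun T => ∫ y : ℝ in (0:ℝ)..lam, f ((s T : ℝ) + y*Complex.I)) atTop (𝓝 0) := by
    intro s hs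
    apply squeeze_zero_norm (a := fun T => Real.exp (M - T^2) * |lam|) ?_ ?_
    · intro T
      have : ∀ y ∈ Set.uIoc (0:ℝ) lam,
          ‖f ((s T : ℝ) + y*Complex.I)‖ ≤ Real.exp (M - T^2) := by
        intro y hy
        have hy' : -|lam| ≤ y ∧ y ≤ |lam| := by
          have h1 : -|lam| ≤ min 0 lam := le_min (neg_nonpos.mpr (abs_nonneg lam)) (neg_abs_le lam)
          have h2 : max 0 lam ≤ |lam| := max_le (abs_nonneg lam) (le_abs_self lam)
          exact ⟨by linarith [hy.1.le], by linarith [hy.2]⟩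
        calc ‖f ((s T : ℝ) + y*Complex.I)‖ ≤ Real.exp (M - (s T)^2) := hM (s T) y (abs_le.mpr hy')
          _ = Real.exp (M - T^2) := by rw [← _root_.sq_abs (s T), hs T, _root_.sq_abs]
      calc ‖∫ y : ℝ in (0:ℝ)..lam, f ((s T : ℝ) + y*Complex.I)‖
          ≤ Real.exp (M - T^2) * |lam - 0| :=
            intervalIntegral.norm_integral_le_of_norm_le_const this
        _ = Real.exp (M - T^2) * |lam| := by rw [sub_zero]
    · have hsq : Tendsto (fun T : ℝ => T^2) atTop atTop :=
        tendsto_pow_atTop (by norm_num : 2 ≠ 0)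
      have h1 : Tendsto (fun T : ℝ => M - T^2) atTop atBot := by
        have h2 : Tendsto (fun T : ℝ => M + -(T^2)) atTop atBot :=
          tendsto_atBot_add_const_left atTop M (tendsto_neg_atTop_atBot.comp hsq)
        simpa [sub_eq_add_neg] using h2
      have h3 : Tendsto (fun T : ℝ => Real.exp (M - T^2) * |lam|) atTop (𝓝 (0 * |lam|)) :=
        (Real.tendsto_exp_atBot.comp h1).mul_const |lam|
      simpa using h3
  have h4 : Tendsto I₄ atTop (𝓝 0) := by
    have := hvert (fun T => T) (fun T => rfl)
    simpa [hI₄] using this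
  have h5 : Tendsto I₅ atTop (𝓝 0) := by
    have := hvert (fun T => -T) (fun T => abs_neg T)
    simpa [hI₅, Complex.ofReal_neg] using this
  have h1 : Tendsto I₁ atTop (𝓝 (∫ x : ℝ, f (x + lam*Complex.I))) :=
    intervalIntegral_tendsto_integral hint1 tendsto_neg_atTop_atBot tendsto_id
  have h2 : Tendsto I₂ atTop (𝓝 (∫ x : ℝ, f (x:ℂ))) :=
    intervalIntegral_tendsto_integral hint2 tendsto_neg_atTop_atBot tendsto_id
  have h1' : Tendsto I₁ atTop (𝓝 (∫ x : ℝ, f (x:ℂ))) := by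
    have heq : I₁ = fun T => I₂ T + Complex.I * I₄ T - Complex.I * I₅ T := by
      funext T
      have := C0 T
      linear_combination -this
    rw [heq]
    simpa using (h2.add (h4.const_mul Complex.I)).sub (h5.const_mul Complex.I)
  have key : (∫ x : ℝ, f (x + lam*Complex.I)) = ∫ x : ℝ, f (x:ℂ) :=
    tendsto_nhds_unique h1 h1'
  simp_rw [hf] at key
  rw [show (fun y : ℝ => Complex.exp (Complex.I * b * ((y : ℂ) + Complex.I * (lam : ℂ)) -
        (((y : ℂ) + Complex.I * (lam : ℂ)) ^ 2 + C) ^ 2 / 2))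
      = fun y : ℝ => Complex.exp (Complex.I * b * ((y : ℂ) + (lam : ℂ) * Complex.I) -
        (((y : ℂ) + (lam : ℂ) * Complex.I) ^ 2 + C) ^ 2 / 2) from by
    funext y; rw [mul_comm Complex.I ((lam : ℝ) : ℂ)]]
  exact key
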